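/- arXiv:1101.3029 — 6 statements merged into one kernel-verified Lean document; each statement's English description precedes it below -/
import Mathlib

section
/- Let p be an odd prime, let r, s ≥ 1, and let χ be a nontrivial multiplicative character of F_{p^{rs}} of order m whose restriction to the subfield F_{p^s} is also nontrivial. Suppose there exists β ∈ F_{p^s} such that the polynomial X^r − β is irreducible over F_{p^s}, and let α ∈ F_{p^{rs}} be a root of X^r − β. Then G_{rs}(1,χ) = χ̄(r) · G_s(1,χ) · B_{r,s}(α), where B_{r,s}(α) = Σ_{z_1,…,z_{r−1} ∈ F_{p^s}} χ(1 + Σ_{i=1}^{r−1} z_i α^i), χ̄(r) is the complex conjugate of χ evaluated at the image of the integer r in the prime field, and G_s(1,χ) is the Gauss sum over F_{p^s} of the restriction of χ. -/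
open Finset

/-- `ζ_p = exp(2πi/p)`. -/
noncomputable def zetaC (p : ℕ) : ℂ := Complex.exp (2 * (Real.pi : ℂ) * Complex.I / (p : ℂ))

/-- The Gauss sum `G_n(1,χ) = Σ_{y ∈ F} χ(y) ζ_p^{Tr(y)}` of a function `χ : F → ℂ`
over a finite field `F` of characteristic `p`, where the absolute trace to the prime
field is `Algebra.trace (ZMod p) F`. -/
noncomputable def gaussSumF (p : ℕ) (F : Type) [Field F] [Fintype F] [Algebra (ZMod p) F]
    (χ : F → ℂ) : ℂ :=
  ∑ y : F, χ y * zetaC p ^ (Algebra.trace (ZMod p) F y).val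

open Polynomial

/-
Write `K = F(α)` with the basis `1, α, …, α^{r-1}`. Since `α^r = β` lies in `F`, multiplication
by `α^k` (`0 < k < r`) cyclically shifts this basis up to scalars, so `Tr_{K/F}(α^k) = 0` and the
trace of `c + Σ zᵢ αⁱ` is `r c`. Scaling the coordinates `zᵢ` by `c ≠ 0` shows that the sum of
`χ(c + Σ zᵢ αⁱ)` over all `z` equals `χ(c) B_{r,s}(α)`, and it vanishes for `c = 0` because `χ` is
nontrivial on `F`. What remains is the Gauss sum of `F` twisted by `c ↦ r c`, which contributes
`χ(r)⁻¹ = χ̄(r)`.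
-/

theorem Polynomial.cast_ne_zero_of_irreducible_X_pow_sub_C {F : Type*} [Field F] [PerfectField F]
    {n : ℕ} {a : F} (h : Irreducible (X ^ n - C a)) : (n : F) ≠ 0 := by
  intro hn
  have hder : derivative (X ^ n - C a) = 0 := by simp [derivative_X_pow, hn]
  have hsep := PerfectField.separable_of_irreducible h
  rw [Polynomial.Separable, hder, isCoprime_zero_right] at hsep
  exact h.not_isUnit hsep

theorem Module.finrank_eq_of_card_eq_pow {F K : Type*} [Field F] [Fintype F] [AddCommGroup K]
    [Module F K] [Fintype K] {r : ℕ} (h : Fintype.card K = Fintype.card F ^ r) :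
    Module.finrank F K = r :=
  Nat.pow_right_injective Fintype.one_lt_card (Module.card_eq_pow_finrank.symm.trans h)

section PureExtension

variable {F K : Type*} [Field F] [Field K] [Algebra F K] {r : ℕ} {α : K} {β : F}

theorem exists_basis_pow_of_irreducible_X_pow_sub_C [FiniteDimensional F K]
    (hirr : Irreducible (X ^ r - C β)) (hα : α ^ r = algebraMap F K β)
    (hrank : Module.finrank F K = r) : ∃ b : Module.Basis (Fin r) F K, ∀ i, b i = α ^ (i : ℕ) := by
  have hmin : minpoly F α = X ^ r - C β :=
    (minpoly.eq_of_irreducible_of_monic hirr (by simp [hα])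
      (monic_X_pow_sub_C β (ne_zero_of_irreducible_X_pow_sub_C hirr))).symm
  have hli : LinearIndependent F fun i : Fin r => α ^ (i : ℕ) := by
    have h := linearIndependent_pow (K := F) α
    rwa [hmin, natDegree_X_pow_sub_C] at h
  exact ⟨basisOfLinearIndependentOfCardEqFinrank' _ hli (by simp [hrank]), fun i => by simp⟩

theorem trace_pow_eq_zero_of_basis_pow (b : Module.Basis (Fin r) F K) (hb : ∀ i, b i = α ^ (i : ℕ))
    (hα : α ^ r = algebraMap F K β) {k : ℕ} (hk : 0 < k) (hkr : k < r) :
    Algebra.trace F K (α ^ k) = 0 := by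
  classical
  have hshift : ∀ j : Fin r, ∃ (c : F) (i : Fin r), j ≠ i ∧ α ^ k * b j = c • b i := by
    intro j
    by_cases hkj : k + j < r
    · refine ⟨1, ⟨k + j, hkj⟩, fun h => ?_, by rw [one_smul, hb, hb, ← pow_add]⟩
      simp only [Fin.ext_iff] at h
      omega
    · refine ⟨β, ⟨k + j - r, by omega⟩, fun h => ?_, ?_⟩
      · simp only [Fin.ext_iff] at h
        omega
      · rw [hb, hb, ← pow_add, Algebra.smul_def, ← hα, ← pow_add]
        congr 1
        dsimp only
        omega
  rw [Algebra.trace_eq_matrix_trace b, Matrix.trace]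
  refine sum_eq_zero fun j _ => ?_
  obtain ⟨c, i, hji, h⟩ := hshift j
  rw [Matrix.diag_apply, Algebra.leftMulMatrix_eq_repr_mul, h, map_smul, b.repr_self,
    Finsupp.smul_apply, Finsupp.single_eq_of_ne hji, smul_zero]

variable {n : ℕ} (b : Module.Basis (Fin (n + 1)) F K) (hb : ∀ i, b i = α ^ (i : ℕ))
include hb

theorem trace_algebraMap_add_sum_pow_succ (hα : α ^ (n + 1) = algebraMap F K β) (c : F)
    (z : Fin n → F) :
    Algebra.trace F K (algebraMap F K c + ∑ i : Fin n, algebraMap F K (z i) * α ^ ((i : ℕ) + 1))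
      = (n + 1 : ℕ) * c := by
  have hvanish (i : Fin n) : Algebra.trace F K (algebraMap F K (z i) * α ^ ((i : ℕ) + 1)) = 0 := by
    rw [← Algebra.smul_def, map_smul,
      trace_pow_eq_zero_of_basis_pow b hb hα i.val.succ_pos (by omega), smul_zero]
  rw [map_add, map_sum, sum_eq_zero fun i _ => hvanish i, add_zero,
    Algebra.trace_algebraMap_of_basis b, Fintype.card_fin, nsmul_eq_mul]

theorem sum_eq_sum_algebraMap_add_sum_pow_succ [Fintype F] [Fintype K] {M : Type*} [AddCommMonoid M]
    (f : K → M) :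
    ∑ x, f x = ∑ c : F, ∑ z : Fin n → F,
      f (algebraMap F K c + ∑ i : Fin n, algebraMap F K (z i) * α ^ ((i : ℕ) + 1)) := by
  rw [← Fintype.sum_prod_type', ← Equiv.sum_comp
    ((Fin.consEquiv fun _ => F).trans b.equivFun.symm.toEquiv)]
  refine Fintype.sum_congr _ _ fun cz => congrArg f ?_
  simp [Module.Basis.equivFun_symm_apply, Fin.sum_univ_succ, hb, Algebra.smul_def]

end PureExtension

section CharacterSum

variable {F K R : Type*} [Field F] [Fintype F] [CommRing K] [CommRing R] (ι : F →+* K)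
  (χ : MulChar K R) {n : ℕ} (v : Fin n → K)

theorem sum_mulChar_map_mul_add_sum {y : F} (hy : y ≠ 0) (c : F) :
    ∑ z : Fin n → F, χ (ι (y * c) + ∑ i, ι (z i) * v i)
      = χ (ι y) * ∑ z : Fin n → F, χ (ι c + ∑ i, ι (z i) * v i) := by
  rw [mul_sum, ← Equiv.sum_comp (Equiv.piCongrRight fun _ => Equiv.mulLeft₀ y hy)]
  refine Fintype.sum_congr _ _ fun z => ?_
  rw [← map_mul, mul_add, mul_sum]
  simp [mul_assoc]

theorem sum_mulChar_map_add_sum [Nontrivial K] [IsDomain R]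
    (hres : ∃ y : F, y ≠ 0 ∧ χ (ι y) ≠ 1) (c : F) :
    ∑ z : Fin n → F, χ (ι c + ∑ i, ι (z i) * v i)
      = χ (ι c) * ∑ z : Fin n → F, χ (1 + ∑ i, ι (z i) * v i) := by
  by_cases hc : c = 0
  · obtain ⟨y, hy, hχy⟩ := hres
    have hfix := sum_mulChar_map_mul_add_sum ι χ v hy 0
    rw [mul_zero, eq_comm, mul_left_eq_self₀] at hfix
    rw [hc, hfix.resolve_left hχy, map_zero, MulChar.map_zero, zero_mul]
  · simpa using sum_mulChar_map_mul_add_sum ι χ v hc 1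

end CharacterSum

theorem sum_mulChar_mul_zetaC_pow_trace_mul {p : ℕ} {F K : Type} [Field F] [Fintype F]
    [Algebra (ZMod p) F] [CommRing K] (ι : F →+* K) (χ : MulChar K ℂ) {u : F} (hu : u ≠ 0) :
    ∑ c : F, χ (ι c) * zetaC p ^ (Algebra.trace (ZMod p) F (u * c)).val
      = (χ (ι u))⁻¹ * gaussSumF p F (fun y => χ (ι y)) := by
  have hχu : χ (ι u) ≠ 0 := ((Ne.isUnit hu).map ι).map χ |>.ne_zero
  rw [eq_inv_mul_iff_mul_eq₀ hχu, gaussSumF, mul_sum]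
  exact Fintype.sum_equiv (Equiv.mulLeft₀ u hu) _ _ fun c => by simp [mul_assoc]

theorem stmt0_general (p r s : ℕ) (hp : p.Prime)
    (F K : Type) [Field F] [Fintype F] [Field K] [Fintype K]
    [Algebra (ZMod p) F] [Algebra (ZMod p) K]
    (hcardF : Fintype.card F = p ^ s) (hcardK : Fintype.card K = p ^ (r * s))
    (ι : F →+* K) (χ : MulChar K ℂ)
    (hres : ∃ y : F, y ≠ 0 ∧ χ (ι y) ≠ 1)
    (β : F) (hirr : Irreducible (Polynomial.X ^ r - Polynomial.C β))
    (α : K) (hα : α ^ r = ι β) :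
    gaussSumF p K (fun y => χ y) =
      (starRingEnd ℂ) (χ (r : K)) * gaussSumF p F (fun y => χ (ι y)) *
        ∑ z : Fin (r - 1) → F, χ (1 + ∑ i : Fin (r - 1), ι (z i) * α ^ ((i : ℕ) + 1)) := by
  have : Fact p.Prime := ⟨hp⟩
  let : Algebra F K := ι.toAlgebra
  have : IsScalarTower (ZMod p) F K :=
    IsScalarTower.of_algebraMap_eq' (RingHom.ext_zmod _ _)
  have hrank : Module.finrank F K = r :=
    Module.finrank_eq_of_card_eq_pow (by rw [hcardK, hcardF, ← pow_mul, mul_comm])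
  obtain ⟨b, hb⟩ := exists_basis_pow_of_irreducible_X_pow_sub_C hirr hα hrank
  have hrF : (r : F) ≠ 0 := cast_ne_zero_of_irreducible_X_pow_sub_C hirr
  have hstar : starRingEnd ℂ (χ (r : K)) = (χ (ι r))⁻¹ := by
    rw [← map_natCast ι r, ← RCLike.star_def, MulChar.star_apply', MulChar.inv_apply_eq_inv']
  obtain ⟨n, rfl⟩ : ∃ n, r = n + 1 :=
    Nat.exists_eq_add_one.mpr (Nat.pos_of_ne_zero (ne_zero_of_irreducible_X_pow_sub_C hirr))
  calc gaussSumF p K (fun y => χ y)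
      = ∑ c : F, ∑ z : Fin n → F, χ (ι c + ∑ i, ι (z i) * α ^ ((i : ℕ) + 1)) *
          zetaC p ^ (Algebra.trace (ZMod p) F ((n + 1 : ℕ) * c)).val := by
        rw [gaussSumF, sum_eq_sum_algebraMap_add_sum_pow_succ b hb]
        refine sum_congr rfl fun c _ => sum_congr rfl fun z _ => ?_
        rw [← Algebra.trace_trace (S := F), trace_algebraMap_add_sum_pow_succ b hb hα]
        rfl
    _ = (∑ c : F, χ (ι c) * zetaC p ^ (Algebra.trace (ZMod p) F ((n + 1 : ℕ) * c)).val) *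
          ∑ z : Fin n → F, χ (1 + ∑ i : Fin n, ι (z i) * α ^ ((i : ℕ) + 1)) := by
        simp only [← sum_mul,
          sum_mulChar_map_add_sum ι χ (fun i : Fin n => α ^ ((i : ℕ) + 1)) hres]
        rw [sum_mul]
        exact sum_congr rfl fun c _ => by ring
    _ = _ := by
        rw [sum_mulChar_mul_zetaC_pow_trace_mul ι χ hrF, hstar, Nat.add_sub_cancel]

theorem stmt0 (p r s m : ℕ) (hp : p.Prime) (hodd : p ≠ 2) (hr : 1 ≤ r) (hs : 1 ≤ s)
    (F K : Type) [Field F] [Fintype F] [Field K] [Fintype K]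
    [Algebra (ZMod p) F] [Algebra (ZMod p) K]
    (hcardF : Fintype.card F = p ^ s) (hcardK : Fintype.card K = p ^ (r * s))
    (ι : F →+* K) (χ : MulChar K ℂ)
    (hord : orderOf χ = m) (hnt : χ ≠ 1)
    (hres : ∃ y : F, y ≠ 0 ∧ χ (ι y) ≠ 1)
    (β : F) (hirr : Irreducible (Polynomial.X ^ r - Polynomial.C β))
    (α : K) (hα : α ^ r = ι β) :
    gaussSumF p K (fun y => χ y) =
      (starRingEnd ℂ) (χ (r : K)) * gaussSumF p F (fun y => χ (ι y)) *
        ∑ z : Fin (r - 1) → F, χ (1 + ∑ i : Fin (r - 1), ι (z i) * α ^ ((i : ℕ) + 1)) :=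
  stmt0_general p r s hp F K hcardF hcardK ι χ hres β hirr α hα
end

section
/- Let p be an odd prime, s ≥ 1, and let χ be a nontrivial multiplicative character of F_{p^{2s}} whose restriction to the subfield F_{p^s} is also nontrivial. Let β ∈ F_{p^s} be such that X² − β is irreducible over F_{p^s}, and let α ∈ F_{p^{2s}} be a root of X² − β. Then G_{2s}(1,χ) = χ(α) · G_s(1,χ) · A_s(1/(2α)), where A_s(γ) = Σ_{y ∈ F_{p^s}} χ(y + γ) for γ ∈ F_{p^{2s}}, and G_s(1,χ) is the Gauss sum over F_{p^s} of the restriction of χ. -/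
open Finset

/-!
Since `β` is not a square in `F`, every element of `K` is uniquely `a + bα` with `a, b ∈ F`, and
`Tr_{K/F}(a + bα) = 2a` because `α` has minimal polynomial `X² - β`. Hence
`G_{2s} = Σ_a ζ^{Tr(2a)} Σ_b χ(a + bα)`. For `a ≠ 0` the substitution `b = 2a·y` gives
`Σ_b χ(a + bα) = χ(2aα) · A_s(1/(2α))`; for `a = 0` both sides vanish because `χ` is nontrivial
on `F`. Reindexing `a ↦ 2a` leaves `χ(α) · A_s(1/(2α)) · G_s`.
-/

open Polynomial

namespace MulChar

variable {F K R : Type*} [Field F] [Field K] [CommRing R]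

def compRingHom (χ : MulChar K R) (ι : F →+* K) : MulChar F R where
  toFun y := χ (ι y)
  map_one' := by simp
  map_mul' x y := by simp
  map_nonunit' y hy := by
    rw [isUnit_iff_ne_zero, not_not] at hy
    simp [hy]

@[simp]
lemma compRingHom_apply (χ : MulChar K R) (ι : F →+* K) (y : F) :
    χ.compRingHom ι y = χ (ι y) :=
  rfl

lemma sum_compRingHom_eq_zero [IsDomain R] [Fintype F] {χ : MulChar K R} {ι : F →+* K}
    (h : ∃ y : F, y ≠ 0 ∧ χ (ι y) ≠ 1) : ∑ y : F, χ (ι y) = 0 := by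
  obtain ⟨y, hy0, hy⟩ := h
  refine sum_eq_zero_of_ne_one (χ := χ.compRingHom ι) fun h1 => hy ?_
  simpa [one_apply (isUnit_iff_ne_zero.mpr hy0)] using congrArg (fun φ : MulChar F R => φ y) h1

end MulChar

lemma two_ne_zero_of_algebra_zmod {p : ℕ} [Fact p.Prime] (hodd : p ≠ 2) (F : Type*) [Field F]
    [Algebra (ZMod p) F] : (2 : F) ≠ 0 := by
  have := charP_of_injective_algebraMap (algebraMap (ZMod p) F).injective p
  exact Ring.two_ne_zero (by rwa [ringChar.eq F p])

section QuadraticExtension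

variable {F K : Type*} [Field F] [Field K] {β : F} {α : K}

lemma ne_of_sq_eq_of_forall_sq_ne {ι : F →+* K} (hβ : ∀ c : F, c ^ 2 ≠ β) (hα : α ^ 2 = ι β)
    (c : F) : ι c ≠ α := fun h =>
  hβ c (ι.injective (by rw [map_pow, h, hα]))

lemma injective_add_mul_of_sq_eq {ι : F →+* K} (hβ : ∀ c : F, c ^ 2 ≠ β) (hα : α ^ 2 = ι β) :
    Function.Injective fun ab : F × F => ι ab.1 + ι ab.2 * α := by
  rintro ⟨a, b⟩ ⟨a', b'⟩ h
  simp only at h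
  obtain rfl | hb := eq_or_ne b b'
  · simpa using ι.injective (add_right_cancel h)
  · refine absurd ?_ (ne_of_sq_eq_of_forall_sq_ne hβ hα ((a - a') / (b' - b)))
    rw [map_div₀, map_sub, map_sub, div_eq_iff (sub_ne_zero.mpr (ι.injective.ne hb.symm))]
    linear_combination h

lemma bijective_add_mul_of_sq_eq [Fintype F] [Fintype K] {ι : F →+* K}
    (hcard : Fintype.card K = Fintype.card F ^ 2) (hβ : ∀ c : F, c ^ 2 ≠ β)
    (hα : α ^ 2 = ι β) : Function.Bijective fun ab : F × F => ι ab.1 + ι ab.2 * α := by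
  rw [Fintype.bijective_iff_injective_and_card, Fintype.card_prod, hcard, sq]
  exact ⟨injective_add_mul_of_sq_eq hβ hα, rfl⟩

lemma trace_add_mul_of_sq_eq [Algebra F K] [Fintype F] [Fintype K]
    (hcard : Fintype.card K = Fintype.card F ^ 2) (hirr : Irreducible (X ^ 2 - C β))
    (hα : α ^ 2 = algebraMap F K β) (a b : F) :
    Algebra.trace F K (algebraMap F K a + algebraMap F K b * α) = 2 * a := by
  have : FiniteDimensional F K := Module.Finite.of_finite
  have hrank : Module.finrank F K = 2 :=
    Nat.pow_right_injective (Fintype.one_lt_card (α := F)) <| by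
      simp only [← Module.card_eq_pow_finrank, hcard]
  have hminpoly : minpoly F α = X ^ 2 - C β := by
    refine (minpoly.eq_of_irreducible_of_monic hirr ?_ (monic_X_pow_sub_C β two_ne_zero)).symm
    simp [hα]
  have htrα : Algebra.trace F K α = 0 := by
    rw [trace_eq_finrank_mul_minpoly_nextCoeff, hminpoly]
    simp [nextCoeff]
  rw [map_add, ← Algebra.smul_def, map_smul, Algebra.trace_algebraMap, htrα, hrank]
  simp

lemma sum_mulChar_add_mul_eq {R : Type*} [CommRing R] [Fintype F] (χ : MulChar K R)
    {ι : F →+* K} (h2 : (2 : F) ≠ 0) (hα0 : α ≠ 0) (hsum : ∑ b : F, χ (ι b) = 0) (c : F) :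
    ∑ b : F, χ (ι c + ι b * α) = χ (ι (2 * c) * α) * ∑ y : F, χ (ι y + (2 * α)⁻¹) := by
  obtain rfl | hc := eq_or_ne c 0
  · simp_rw [mul_zero, map_zero, zero_mul, MulChar.map_zero, zero_mul, zero_add, map_mul,
      ← sum_mul, hsum, zero_mul]
  have h2K : (2 : K) ≠ 0 := map_ofNat ι 2 ▸ (map_ne_zero ι).mpr h2
  have hcK : ι c ≠ 0 := (map_ne_zero ι).mpr hc
  rw [mul_sum, ← (mulLeft_bijective₀ (2 * c) (mul_ne_zero h2 hc)).sum_comp]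
  refine sum_congr rfl fun y _ => ?_
  rw [← map_mul]
  congr 1
  simp only [map_mul, map_ofNat]
  field_simp
  ring

end QuadraticExtension

theorem stmt1_general (p s : ℕ) (hp : p.Prime) (hodd : p ≠ 2)
    (F K : Type) [Field F] [Fintype F] [Field K] [Fintype K]
    [Algebra (ZMod p) F] [Algebra (ZMod p) K]
    (hcardF : Fintype.card F = p ^ s) (hcardK : Fintype.card K = p ^ (2 * s))
    (ι : F →+* K) (χ : MulChar K ℂ)
    (hres : ∃ y : F, y ≠ 0 ∧ χ (ι y) ≠ 1)
    (β : F) (hirr : Irreducible (Polynomial.X ^ 2 - Polynomial.C β))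
    (α : K) (hα : α ^ 2 = ι β) :
    gaussSumF p K (fun y => χ y) =
      χ α * gaussSumF p F (fun y => χ (ι y)) *
        ∑ y : F, χ (ι y + (2 * α)⁻¹) := by
  have : Fact p.Prime := ⟨hp⟩
  let : Algebra F K := ι.toAlgebra
  have : IsScalarTower (ZMod p) F K := .of_algebraMap_eq' (RingHom.ext_zmod _ _)
  have hcard : Fintype.card K = Fintype.card F ^ 2 := by
    rw [hcardK, hcardF, ← pow_mul, mul_comm]
  have hβ := (X_pow_sub_C_irreducible_iff_of_prime Nat.prime_two).mp hirr
  have hα0 : α ≠ 0 := fun h => ne_of_sq_eq_of_forall_sq_ne hβ hα 0 (by rw [map_zero, h])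
  have htrace (a b : F) :
      Algebra.trace (ZMod p) K (ι a + ι b * α) = Algebra.trace (ZMod p) F (2 * a) := by
    rw [← Algebra.trace_trace (S := F)]
    exact congrArg _ (trace_add_mul_of_sq_eq hcard hirr hα a b)
  have h2 := two_ne_zero_of_algebra_zmod hodd F
  have hinner := sum_mulChar_add_mul_eq χ h2 hα0 (MulChar.sum_compRingHom_eq_zero hres)
  set A := ∑ y : F, χ (ι y + (2 * α)⁻¹)
  calc gaussSumF p K (fun y => χ y)
      = ∑ a : F, ∑ b : F,
          χ (ι a + ι b * α) * zetaC p ^ (Algebra.trace (ZMod p) F (2 * a)).val := by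
        rw [gaussSumF, ← Fintype.sum_prod_type',
          ← (bijective_add_mul_of_sq_eq hcard hβ hα).sum_comp]
        simp only [htrace]
    _ = χ α * A * ∑ a : F,
          χ (ι (2 * a)) * zetaC p ^ (Algebra.trace (ZMod p) F (2 * a)).val := by
        rw [mul_sum]
        refine sum_congr rfl fun a _ => ?_
        rw [← sum_mul, hinner, map_mul χ]
        ring
    _ = χ α * gaussSumF p F (fun y => χ (ι y)) * A := by
        rw [(mulLeft_bijective₀ 2 h2).sum_comp
          (fun a => χ (ι a) * zetaC p ^ (Algebra.trace (ZMod p) F a).val), gaussSumF]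
        ring

theorem stmt1 (p s : ℕ) (hp : p.Prime) (hodd : p ≠ 2) (hs : 1 ≤ s)
    (F K : Type) [Field F] [Fintype F] [Field K] [Fintype K]
    [Algebra (ZMod p) F] [Algebra (ZMod p) K]
    (hcardF : Fintype.card F = p ^ s) (hcardK : Fintype.card K = p ^ (2 * s))
    (ι : F →+* K) (χ : MulChar K ℂ)
    (hnt : χ ≠ 1)
    (hres : ∃ y : F, y ≠ 0 ∧ χ (ι y) ≠ 1)
    (β : F) (hirr : Irreducible (Polynomial.X ^ 2 - Polynomial.C β))
    (α : K) (hα : α ^ 2 = ι β) :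
    gaussSumF p K (fun y => χ y) =
      χ α * gaussSumF p F (fun y => χ (ι y)) *
        ∑ y : F, χ (ι y + (2 * α)⁻¹) :=
  stmt1_general p s hp hodd F K hcardF hcardK ι χ hres β hirr α hα
end

section
/- Let p be a prime and m an odd positive integer with p ≡ −1 (mod m). Let s ≥ 1 and let χ be a multiplicative character of F_{p^s} of order m. Then the Gauss sum G_s(1,χ) is a real number, i.e. its complex conjugate equals itself. -/
/-!
With `ψ(y) = ζ_p ^ Tr(y)`, complex conjugation sends `G(χ, ψ)` to
`G(χ⁻¹, ψ⁻¹) = χ(-1) G(χ⁻¹, ψ)`, and `χ(-1) = 1` because `χ` has odd order. Since `m ∣ p + 1` we have `χ⁻¹ = χ ^ p`, and `G(χ ^ p, ψ) = G(χ, ψ)`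
by substituting `y ↦ y ^ p`, which is a bijection of `F` fixing the trace.
-/

open Finset

theorem FiniteField.algebraTrace_pow_card {K L : Type*} [Field K] [Fintype K] [Field L]
    [Algebra K L] [Algebra.IsAlgebraic K L] (x : L) :
    Algebra.trace K L (x ^ Fintype.card K) = Algebra.trace K L x :=
  Algebra.trace_eq_of_algEquiv (FiniteField.frobeniusAlgEquivOfAlgebraic K L) x

theorem gaussSum_pow_eq_of_bijective {R R' : Type*} [CommRing R] [Fintype R] [CommRing R']
    (χ : MulChar R R') (ψ : AddChar R R') {n : ℕ} (hn : n ≠ 0)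
    (hbij : Function.Bijective fun x : R ↦ x ^ n) (hψ : ∀ x, ψ (x ^ n) = ψ x) :
    gaussSum (χ ^ n) ψ = gaussSum χ ψ := by
  rw [gaussSum, gaussSum, ← hbij.sum_comp (fun x ↦ χ x * ψ x)]
  simp only [hψ, χ.pow_apply' hn, map_pow]

theorem pow_eq_inv_of_orderOf_dvd_add_one {G : Type*} [Group G] {g : G} {n : ℕ}
    (h : orderOf g ∣ n + 1) : g ^ n = g⁻¹ :=
  eq_inv_of_mul_eq_one_left <| by rw [← pow_succ, orderOf_dvd_iff_pow_eq_one.mp h]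

theorem zetaC_pow_val_eq_stdAddChar (p : ℕ) [NeZero p] (a : ZMod p) :
    zetaC p ^ a.val = ZMod.stdAddChar a := by
  rw [ZMod.stdAddChar_apply, ZMod.toCircle_apply, zetaC, ← Complex.exp_nat_mul]
  ring_nf

noncomputable def traceAddChar (p : ℕ) [NeZero p] (F : Type*) [Field F] [Algebra (ZMod p) F] :
    AddChar F ℂ :=
  ZMod.stdAddChar.compAddMonoidHom (Algebra.trace (ZMod p) F).toAddMonoidHom

theorem gaussSumF_eq_gaussSum (p : ℕ) [NeZero p] (F : Type) [Field F] [Fintype F]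
    [Algebra (ZMod p) F] (χ : MulChar F ℂ) :
    gaussSumF p F (fun y ↦ χ y) = gaussSum χ (traceAddChar p F) := by
  simp only [gaussSumF, gaussSum, zetaC_pow_val_eq_stdAddChar]
  rfl

theorem traceAddChar_pow_char (p : ℕ) [Fact p.Prime] (F : Type*) [Field F] [Fintype F]
    [Algebra (ZMod p) F] (x : F) : traceAddChar p F (x ^ p) = traceAddChar p F x := by
  have := FiniteField.algebraTrace_pow_card (K := ZMod p) x
  rw [ZMod.card] at this
  simp [traceAddChar, this]

theorem stmt3_general (p m : ℕ) (hp : p.Prime) (hm : Odd m) (hpm : (p : ZMod m) = -1)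
    (F : Type) [Field F] [Fintype F] [Algebra (ZMod p) F]
    (χ : MulChar F ℂ) (hord : orderOf χ = m) :
    (starRingEnd ℂ) (gaussSumF p F (fun y => χ y)) = gaussSumF p F (fun y => χ y) := by
  have : Fact p.Prime := ⟨hp⟩
  have : CharP F p := charP_of_injective_algebraMap' (ZMod p) p
  set ψ := traceAddChar p F
  have hdvd : orderOf χ ∣ p + 1 :=
    hord ▸ (ZMod.natCast_eq_zero_iff _ _).mp (by push_cast [hpm]; ring)
  have hχinv_neg_one : χ⁻¹ (-1) = 1 :=
    MulChar.val_neg_one_eq_one_of_odd_order hm <| by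
      rw [inv_pow, ← hord, pow_orderOf_eq_one, inv_one]
  rw [gaussSumF_eq_gaussSum]
  calc (starRingEnd ℂ) (gaussSum χ ψ)
      = χ⁻¹ (-1) * gaussSum χ⁻¹ ψ⁻¹ := by
        rw [hχinv_neg_one, one_mul]; exact star_gaussSum_eq χ ψ
    _ = gaussSum (χ ^ p) ψ := by
        rw [mul_gaussSum_inv_eq_gaussSum, pow_eq_inv_of_orderOf_dvd_add_one hdvd]
    _ = gaussSum χ ψ :=
      gaussSum_pow_eq_of_bijective χ ψ hp.ne_zero (bijective_frobenius F p)
        (traceAddChar_pow_char p F)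

theorem stmt3 (p m s : ℕ) (hp : p.Prime) (hm : Odd m) (hpm : (p : ZMod m) = -1)
    (hs : 1 ≤ s)
    (F : Type) [Field F] [Fintype F] [Algebra (ZMod p) F]
    (hcard : Fintype.card F = p ^ s)
    (χ : MulChar F ℂ) (hord : orderOf χ = m) :
    (starRingEnd ℂ) (gaussSumF p F (fun y => χ y)) = gaussSumF p F (fun y => χ y) :=
  stmt3_general p m hp hm hpm F χ hord
end

section
/- Let p be a prime, s ≥ 1, and let χ be a nontrivial multiplicative character of F_{p^{2s}} whose restriction to the subfield F_{p^s} is trivial, i.e. χ(x) = 1 for all x ∈ F_{p^s}^*. Then for every α ∈ F_{p^{2s}} with α ∉ F_{p^s}, one has Σ_{z ∈ F_{p^s}} χ(z + α) = −1. -/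
/-!
Since `α ∉ F`, the pairs `(a, b) ↦ a + bα` parametrize `K` bijectively, as `|K| = |F|²`.
Summing `χ` over `K` along this parametrization, the row `b = 0` contributes `q - 1` and each
row `b ≠ 0` contributes `S = ∑ z, χ(z + α)`, because `a + bα = b (a/b + α)` and `χ(b) = 1`.
Hence `0 = (q - 1)(1 + S)` with `q = |F| ≥ 2`.
-/

open Finset

section

variable {F K : Type*} [Field F] [Field K] (ι : F →+* K)

theorem RingHom.add_mul_injective_of_notMem_range {α : K} (hα : α ∉ Set.range ι) :
    Function.Injective fun x : F × F => ι x.1 + ι x.2 * α := by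
  rintro ⟨a, b⟩ ⟨a', b'⟩ h
  simp only at h
  obtain rfl : b = b' := by
    by_contra hb
    have hb' : ι (b' - b) ≠ 0 := (map_ne_zero ι).mpr (sub_ne_zero.mpr (Ne.symm hb))
    refine hα ⟨(a - a') / (b' - b), ?_⟩
    rw [map_div₀, div_eq_iff hb', map_sub, map_sub]
    linear_combination h
  exact Prod.ext (ι.injective (add_right_cancel h)) rfl

theorem RingHom.add_mul_bijective_of_card_eq_sq [Fintype F] [Fintype K]
    (hcard : Fintype.card K = Fintype.card F ^ 2) {α : K} (hα : α ∉ Set.range ι) :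
    Function.Bijective fun x : F × F => ι x.1 + ι x.2 * α := by
  rw [Fintype.bijective_iff_injective_and_card, Fintype.card_prod, hcard, sq]
  exact ⟨ι.add_mul_injective_of_notMem_range hα, rfl⟩

variable [Fintype F] {R : Type*} [CommRing R] {χ : MulChar K R}

theorem MulChar.sum_comp_ringHom_of_trivial (htriv : ∀ x : F, x ≠ 0 → χ (ι x) = 1) :
    ∑ a : F, χ (ι a) = Fintype.card F - 1 := by
  classical
  rw [Fintype.sum_eq_add_sum_compl 0, map_zero, χ.map_zero, zero_add,
    sum_congr rfl fun a ha => htriv a (by simpa using ha), sum_const, card_compl, card_singleton,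
    nsmul_one, Nat.cast_sub Fintype.card_pos, Nat.cast_one]

theorem MulChar.sum_add_mul_eq_sum_add (htriv : ∀ x : F, x ≠ 0 → χ (ι x) = 1) (α : K) {b : F}
    (hb : b ≠ 0) : ∑ a : F, χ (ι a + ι b * α) = ∑ z : F, χ (ι z + α) := by
  refine Fintype.sum_equiv (Equiv.mulLeft₀ b⁻¹ (inv_ne_zero hb)) _ _ fun a => ?_
  have hιb : ι b ≠ 0 := (map_ne_zero ι).mpr hb
  have : ι a + ι b * α = ι b * (ι (b⁻¹ * a) + α) := by
    rw [map_mul, map_inv₀]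
    field_simp
  rw [this, map_mul, htriv b hb, one_mul]
  rfl

end

theorem stmt6_general (p s : ℕ)
    (F K : Type) [Field F] [Fintype F] [Field K] [Fintype K]
    (hcardF : Fintype.card F = p ^ s) (hcardK : Fintype.card K = p ^ (2 * s))
    (ι : F →+* K) (χ : MulChar K ℂ) (hnt : χ ≠ 1)
    (htriv : ∀ x : F, x ≠ 0 → χ (ι x) = 1)
    (α : K) (hα : α ∉ Set.range ι) :
    ∑ z : F, χ (ι z + α) = -1 := by
  classical
  have hbij := ι.add_mul_bijective_of_card_eq_sq (by rw [hcardK, hcardF, ← pow_mul, mul_comm]) hα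
  have hsum : ∑ y : K, χ y = ((Fintype.card F : ℂ) - 1) * (1 + ∑ z : F, χ (ι z + α)) := by
    rw [← hbij.sum_comp, Fintype.sum_prod_type_right, Fintype.sum_eq_add_sum_compl 0]
    simp only [map_zero, zero_mul, add_zero]
    rw [MulChar.sum_comp_ringHom_of_trivial ι htriv,
      sum_congr rfl fun b hb => MulChar.sum_add_mul_eq_sum_add ι htriv α (by simpa using hb),
      sum_const, card_compl, card_singleton, nsmul_eq_mul, Nat.cast_sub Fintype.card_pos]
    ring
  have hq : (Fintype.card F : ℂ) - 1 ≠ 0 := by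
    rw [sub_ne_zero, Ne, Nat.cast_eq_one]
    exact Fintype.one_lt_card.ne'
  rw [MulChar.sum_eq_zero_of_ne_one hnt, zero_eq_mul] at hsum
  linear_combination hsum.resolve_left hq

theorem stmt6 (p s : ℕ) (hp : p.Prime) (hs : 1 ≤ s)
    (F K : Type) [Field F] [Fintype F] [Field K] [Fintype K]
    (hcardF : Fintype.card F = p ^ s) (hcardK : Fintype.card K = p ^ (2 * s))
    (ι : F →+* K) (χ : MulChar K ℂ) (hnt : χ ≠ 1)
    (htriv : ∀ x : F, x ≠ 0 → χ (ι x) = 1)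
    (α : K) (hα : α ∉ Set.range ι) :
    ∑ z : F, χ (ι z + α) = -1 :=
  stmt6_general p s F K hcardF hcardK ι χ hnt htriv α hα
end

section
/- Let p be a prime with p ≡ 5 (mod 6), let s ≥ 1 be even, and let χ be a nontrivial cubic multiplicative character of F_{p^{2s}}. Then G_{2s}(1,χ) = (−p)^{s/2} · G_s(1,χ), where G_s(1,χ) is the Gauss sum over F_{p^s} of the restriction of χ to the subfield F_{p^s}. -/
open Finset

/-!
Let `p ≡ 2 (mod 3)` and let `L` be a field with `p ^ (2 * m)` elements. The Gauss sum `g` of a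
cubic character `φ` of `L` is `-(-p) ^ m`: Frobenius fixes the additive character `ζ_p ^ Tr`,
so `g(φ ^ p) = g(φ)`, and `φ ^ p = φ ^ 2 = φ⁻¹`, `φ (-1) = 1` give `g ^ 2 = p ^ (2 * m)`.
The Jacobi sum `J(φ, φ) = g(φ) ^ 2 / g(φ ^ 2)` equals `g` and is `≡ -1` modulo
`(ω - 1) ^ 2 = -3ω` in `ℤ[ω]`, which excludes the sign `g = (-p) ^ m ≡ 1 (mod 3)`.

The theorem applies this to `K` and to `F`, where `|F| = q = p ^ s` with `q ≡ 1 (mod 3)`.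
The restriction of `χ` to `F` is again cubic: otherwise `χ` kills `Fˣ`, a subgroup of index
`q + 1` in `Kˣ`, so `χ ^ (q + 1) = 1`, while `q + 1` is prime to `3`.
-/

lemma isPrimitiveRoot_zetaC (p : ℕ) [NeZero p] : IsPrimitiveRoot (zetaC p) p :=
  Complex.isPrimitiveRoot_exp p (NeZero.ne p)

noncomputable def traceChar (p : ℕ) [NeZero p] (L : Type) [Field L] [Algebra (ZMod p) L] :
    AddChar L ℂ :=
  (AddChar.zmodChar p (isPrimitiveRoot_zetaC p).pow_eq_one).compAddMonoidHom
    (Algebra.trace (ZMod p) L).toAddMonoidHom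

section traceChar

variable {p : ℕ} [Fact p.Prime] {L : Type} [Field L] [Fintype L] [Algebra (ZMod p) L]

lemma gaussSumF_eq_gaussSum_s8 (φ : MulChar L ℂ) :
    gaussSumF p L (fun y => φ y) = gaussSum φ (traceChar p L) :=
  rfl

variable (p L) in
lemma traceChar_isPrimitive : (traceChar p L).IsPrimitive := by
  refine AddChar.IsPrimitive.of_ne_one fun h => ?_
  obtain ⟨t, ht⟩ := Algebra.trace_surjective (ZMod p) L 1
  have h1 : traceChar p L t = 1 := by rw [h, AddChar.one_apply]
  have hp := (Fact.out : p.Prime).one_lt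
  have : Fact (1 < p) := ⟨hp⟩
  rw [traceChar, AddChar.compAddMonoidHom_apply, LinearMap.toAddMonoidHom_coe, ht,
    AddChar.zmodChar_apply, ZMod.val_one, pow_one] at h1
  exact (isPrimitiveRoot_zetaC p).ne_one hp h1

lemma gaussSum_pow_traceChar (φ : MulChar L ℂ) :
    gaussSum (φ ^ p) (traceChar p L) = gaussSum φ (traceChar p L) := by
  let σ := FiniteField.frobeniusAlgEquivOfAlgebraic (ZMod p) L
  have hσ (y : L) : σ y = y ^ p := by
    rw [FiniteField.coe_frobeniusAlgEquivOfAlgebraic, ZMod.card]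
  refine Fintype.sum_equiv σ.toEquiv _ _ fun y => ?_
  simp only [AlgEquiv.toEquiv_eq_coe, EquivLike.coe_coe, traceChar,
    AddChar.compAddMonoidHom_apply, LinearMap.toAddMonoidHom_coe, Algebra.trace_eq_of_algEquiv]
  rw [hσ, MulChar.pow_apply' φ (Fact.out : p.Prime).ne_zero, map_pow]

end traceChar

lemma three_dvd_add_one_of_eq_neg_one_add {μ : ℂ} (hμ : IsPrimitiveRoot μ 3) {c : ℤ}
    {z : ℂ} (hz : z ∈ Algebra.adjoin ℤ {μ}) (hc : (c : ℂ) = -1 + z * (μ - 1) ^ 2) :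
    (3 : ℤ) ∣ c + 1 := by
  have hμsq : μ ^ 2 + μ + 1 = 0 := by
    have h := hμ.geom_sum_eq_zero (by norm_num)
    simp only [Finset.sum_range_succ, Finset.sum_range_zero] at h
    linear_combination h
  have hzint : IsIntegral ℤ z :=
    adjoin_le_integralClosure (hμ.isIntegral (by norm_num)) hz
  -- `(μ - 1) ^ 2 = -3μ`, so `(c + 1) / 3 = -μz` is a rational algebraic integer.
  have hq : ((((c + 1 : ℤ) : ℚ) / 3 : ℚ) : ℂ) = -μ * z := by
    push_cast
    linear_combination hc / 3 + z / 3 * hμsq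
  have hqint : IsIntegral ℤ (((c + 1 : ℤ) : ℚ) / 3 : ℚ) := by
    rw [← isIntegral_algebraMap_iff (A := ℚ) (B := ℂ) (algebraMap ℚ ℂ).injective, eq_ratCast,
      hq]
    exact ((hμ.isIntegral (by norm_num)).neg).mul hzint
  obtain ⟨k, hk⟩ := IsIntegrallyClosed.isIntegral_iff.mp hqint
  refine ⟨k, ?_⟩
  have : ((c + 1 : ℤ) : ℚ) = 3 * k := by
    rw [algebraMap_int_eq, eq_intCast] at hk
    rw [hk]
    ring
  exact_mod_cast this

lemma pow_two_mul_mod_three {p : ℕ} (hp3 : p % 3 = 2) (m : ℕ) : p ^ (2 * m) % 3 = 1 := by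
  rw [pow_mul, Nat.pow_mod, Nat.pow_mod p, hp3]
  simp

lemma gaussSum_traceChar_eq_neg_neg_pow {p : ℕ} [Fact p.Prime] (hp3 : p % 3 = 2) {m : ℕ}
    {L : Type} [Field L] [Fintype L] [Algebra (ZMod p) L]
    (hcard : Fintype.card L = p ^ (2 * m)) {φ : MulChar L ℂ} (hφ : orderOf φ = 3) :
    gaussSum φ (traceChar p L) = -(-(p : ℂ)) ^ m := by
  set g := gaussSum φ (traceChar p L)
  have hφ1 : φ ≠ 1 := fun h => by simp [h] at hφ
  have hφ3 : φ ^ 3 = 1 := hφ ▸ pow_orderOf_eq_one φ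
  have hg2 : gaussSum (φ ^ 2) (traceChar p L) = g := by
    rw [show φ ^ 2 = φ ^ p by rw [← pow_mod_orderOf φ p, hφ, hp3], gaussSum_pow_traceChar]
  have hsq : g ^ 2 = ((-(p : ℂ)) ^ m) ^ 2 := by
    have h := gaussSum_mul_gaussSum_pow_orderOf_sub_one hφ1 (traceChar_isPrimitive p L)
    rw [hφ, show 3 - 1 = 2 from rfl, hg2, MulChar.val_neg_one_eq_one_of_odd_order (by decide) hφ3,
      hcard] at h
    rw [sq, h, ← pow_mul, mul_comm m, pow_mul, pow_mul, neg_sq]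
    push_cast
    ring
  have hg0 : g ≠ 0 := gaussSum_ne_zero_of_nontrivial (by simp) hφ1 (traceChar_isPrimitive p L)
  have hJ : jacobiSum φ φ = g := by
    have hφφ : φ * φ ≠ 1 := by
      rw [← sq]
      exact pow_ne_one_of_lt_orderOf (by norm_num) (by omega)
    have h := jacobiSum_mul_nontrivial hφφ (traceChar p L)
    rw [← sq, hg2] at h
    exact mul_left_cancel₀ hg0 h
  obtain ⟨z, hz, hJz⟩ := exists_jacobiSum_eq_neg_one_add (by norm_num) hφ3 hφ3
    (by have := pow_two_mul_mod_three hp3 m; omega) (isPrimitiveRoot_zetaC 3)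
  have hnegp : (-(p : ℤ)) ^ m ≡ 1 [ZMOD 3] := by
    simpa using (show -(p : ℤ) ≡ 1 [ZMOD 3] by rw [Int.ModEq]; omega).pow m
  rcases sq_eq_sq_iff_eq_or_eq_neg.mp hsq with h | h
  · have h3 := three_dvd_add_one_of_eq_neg_one_add (c := (-(p : ℤ)) ^ m)
      (isPrimitiveRoot_zetaC 3) hz (by push_cast; rw [← h, ← hJ, hJz])
    rw [Int.ModEq] at hnegp
    omega
  · exact h

namespace MulChar

variable {F K R : Type*} [Field F] [CommRing K] [Nontrivial K] [CommMonoidWithZero R]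

def comap (χ : MulChar K R) (ι : F →+* K) : MulChar F R where
  toFun x := χ (ι x)
  map_one' := by simp
  map_mul' x y := by simp
  map_nonunit' x hx := by simp_all [isUnit_iff_ne_zero]

@[simp]
lemma comap_apply (χ : MulChar K R) (ι : F →+* K) (x : F) : χ.comap ι x = χ (ι x) :=
  rfl

@[simp]
lemma comap_one (ι : F →+* K) : (1 : MulChar K R).comap ι = 1 := by
  ext a
  rw [comap_apply, one_apply_coe, one_apply (a.isUnit.map ι)]

lemma comap_pow (χ : MulChar K R) (ι : F →+* K) {n : ℕ} (hn : n ≠ 0) :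
    χ.comap ι ^ n = (χ ^ n).comap ι := by
  ext a
  simp only [comap_apply, pow_apply' _ hn]

end MulChar

lemma MulChar.pow_card_add_one_eq_one_of_comap_eq_one {F K R : Type*} [Field F] [Fintype F]
    [Field K] [Fintype K] [CommMonoidWithZero R] (ι : F →+* K)
    (hcard : Fintype.card K = Fintype.card F ^ 2) {χ : MulChar K R} (h : χ.comap ι = 1) :
    χ ^ (Fintype.card F + 1) = 1 := by
  set q := Fintype.card F
  let H := (Units.map ι.toMonoidHom).range
  have hH : Nat.card H = Nat.card Fˣ :=
    (Nat.card_congr (Equiv.ofInjective _ (Units.map_injective ι.injective))).symm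
  have hq : 1 < q := Fintype.one_lt_card
  have hindex : H.index = q + 1 := by
    have h := H.index_mul_card
    rw [hH, Nat.card_units, Nat.card_units, Nat.card_eq_fintype_card, Nat.card_eq_fintype_card,
      hcard, ← one_pow 2, Nat.sq_sub_sq] at h
    exact Nat.eq_of_mul_eq_mul_right (by omega) h
  ext a
  obtain ⟨b, hb⟩ := hindex ▸ H.pow_index_mem a
  rw [pow_apply_coe, one_apply_coe, ← map_pow, ← Units.val_pow_eq_pow_val, ← hb]
  simpa using congr($h b)

lemma MulChar.orderOf_comap_eq_three {F K R : Type*} [Field F] [Fintype F] [Field K] [Fintype K]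
    [CommMonoidWithZero R] (ι : F →+* K) (hcard : Fintype.card K = Fintype.card F ^ 2)
    (hF : Fintype.card F % 3 = 1) {χ : MulChar K R} (hχ : orderOf χ = 3) :
    orderOf (χ.comap ι) = 3 := by
  have hχ3 : χ ^ 3 = 1 := hχ ▸ pow_orderOf_eq_one χ
  refine orderOf_eq_prime ?_ fun h => ?_
  · rw [comap_pow χ ι three_ne_zero, hχ3, comap_one]
  · have hcop : Nat.Coprime 3 (Fintype.card F + 1) := by
      rw [Nat.Coprime, Nat.gcd_rec, show (Fintype.card F + 1) % 3 = 2 by omega]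
      rfl
    have hχ1 := (pow_eq_one_iff_of_coprime hcop).mp
      ⟨hχ3, pow_card_add_one_eq_one_of_comap_eq_one ι hcard h⟩
    simp [hχ1] at hχ

theorem stmt8_general (p s : ℕ) (hp : p.Prime) (hp6 : p % 6 = 5) (heven : Even s)
    (F K : Type) [Field F] [Fintype F] [Field K] [Fintype K]
    [Algebra (ZMod p) F] [Algebra (ZMod p) K]
    (hcardF : Fintype.card F = p ^ s) (hcardK : Fintype.card K = p ^ (2 * s))
    (ι : F →+* K)
    (χ : MulChar K ℂ) (hord : orderOf χ = 3) :
    gaussSumF p K (fun y => χ y) =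
      (-(p : ℂ)) ^ (s / 2) * gaussSumF p F (fun y => χ (ι y)) := by
  have : Fact p.Prime := ⟨hp⟩
  have hp3 : p % 3 = 2 := by omega
  obtain ⟨t, rfl⟩ := heven
  have hcardF' : Fintype.card F = p ^ (2 * t) := by rw [hcardF, two_mul]
  have hχF : orderOf (χ.comap ι) = 3 :=
    MulChar.orderOf_comap_eq_three ι (by rw [hcardK, hcardF, ← pow_mul, mul_comm])
      (hcardF' ▸ pow_two_mul_mod_three hp3 t) hord
  rw [show (fun y => χ (ι y)) = ⇑(χ.comap ι) from rfl, gaussSumF_eq_gaussSum_s8,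
    gaussSumF_eq_gaussSum_s8, gaussSum_traceChar_eq_neg_neg_pow hp3 hcardK hord,
    gaussSum_traceChar_eq_neg_neg_pow hp3 hcardF' hχF, show (t + t) / 2 = t by omega]
  ring

theorem stmt8 (p s : ℕ) (hp : p.Prime) (hp6 : p % 6 = 5) (hs : 1 ≤ s) (heven : Even s)
    (F K : Type) [Field F] [Fintype F] [Field K] [Fintype K]
    [Algebra (ZMod p) F] [Algebra (ZMod p) K]
    (hcardF : Fintype.card F = p ^ s) (hcardK : Fintype.card K = p ^ (2 * s))
    (ι : F →+* K)
    (χ : MulChar K ℂ) (hnt : χ ≠ 1) (hord : orderOf χ = 3) :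
    gaussSumF p K (fun y => χ y) =
      (-(p : ℂ)) ^ (s / 2) * gaussSumF p F (fun y => χ (ι y)) :=
  stmt8_general p s hp hp6 heven F K hcardF hcardK ι χ hord
end

section
/- Let p ≡ 1 (mod 6) be a prime, let χ be a nontrivial cubic multiplicative character of F_p, and let G_0, G_1, G_2 be the associated Gauss periods. Then (G_0 − G_2)² − (G_0 − G_2)(G_1 − G_2) + (G_1 − G_2)² = p; that is, x = G_0 − G_2 and y = G_1 − G_2 give a representation of p by the binary quadratic form x² − xy + y² in the real algebraic numbers G_0 − G_2, G_1 − G_2. -/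
open Finset

/-- `ζ_3 = exp(2πi/3)`. -/
noncomputable def zeta3 : ℂ := Complex.exp (2 * (Real.pi : ℂ) * Complex.I / 3)

open scoped Classical in
/-- The Gauss period `G_j = Σ_{x ∈ F_p^*, χ(x) = ζ_3^j} ζ_p^x` attached to a (cubic)
character `χ` on the prime field `F_p = ZMod p`. -/
noncomputable def gaussPeriodP (p : ℕ) [NeZero p] (χ : ZMod p → ℂ) (j : ℕ) : ℂ :=
  ∑ x ∈ Finset.univ.filter (fun x : ZMod p => x ≠ 0 ∧ χ x = zeta3 ^ j), zetaC p ^ x.val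

/-- The Gauss sum `G_1(1,χ) = Σ_{y ∈ F_p} χ(y) ζ_p^y` over the prime field `F_p = ZMod p`. -/
noncomputable def gaussSumP (p : ℕ) [NeZero p] (χ : ZMod p → ℂ) : ℂ :=
  ∑ y : ZMod p, χ y * zetaC p ^ y.val

/-!
With `ω = ζ_3`, the Gauss sums of `χ` and `χ²` against `x ↦ ζ_p^x` are
`g(χ) = G_0 + ω G_1 + ω² G_2` and `g(χ²) = G_0 + ω² G_1 + ω G_2`, since `χ` takes the value `ω^j`
exactly on the `j`-th period. As `χ` has odd order, `χ(-1) = 1`, so `g(χ) g(χ²) = g(χ) g(χ⁻¹) = p`,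
and the product on the left is the norm form `(G_0 - G_2)² - (G_0 - G_2)(G_1 - G_2) + (G_1 - G_2)²`.
-/

lemma isPrimitiveRoot_zeta3 : IsPrimitiveRoot zeta3 3 := by
  simpa [zeta3] using Complex.isPrimitiveRoot_exp 3 three_ne_zero

lemma one_add_zeta3_add_zeta3_sq : 1 + zeta3 + zeta3 ^ 2 = 0 := by
  simpa [sum_range_succ] using IsPrimitiveRoot.geom_sum_eq_zero isPrimitiveRoot_zeta3 (by norm_num)

lemma mul_add_mul_add_mul_eq_norm_form {R : Type*} [CommRing R] {ω : R}
    (hω : 1 + ω + ω ^ 2 = 0) (a b c : R) :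
    (a + ω * b + ω ^ 2 * c) * (a + ω ^ 2 * b + ω ^ 4 * c) =
      (a - c) ^ 2 - (a - c) * (b - c) + (b - c) ^ 2 := by
  have hω3 : ω ^ 3 = 1 := by linear_combination (ω - 1) * hω
  linear_combination (a * b + a * c + b * c) * hω +
    (b ^ 2 + c ^ 2 + ω * b * c + ω * a * c + ω ^ 2 * b * c + ω ^ 3 * c ^ 2) * hω3

lemma MulChar.apply_pow_eq_one {R R' : Type*} [CommMonoid R] [CommMonoidWithZero R']
    {χ : MulChar R R'} {n : ℕ} (hχ : χ ^ n = 1) {a : R} (ha : IsUnit a) : χ a ^ n = 1 := by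
  rw [← ha.unit_spec, ← MulChar.pow_apply_coe, hχ, MulChar.one_apply_coe]

lemma gaussSum_mul_gaussSum_sq_eq_card {F R : Type*} [Field F] [Fintype F] [CommRing R]
    [IsDomain R] {χ : MulChar F R} (hχ : orderOf χ = 3) {ψ : AddChar F R}
    (hψ : ψ.IsPrimitive) : gaussSum χ ψ * gaussSum (χ ^ 2) ψ = Fintype.card F := by
  have hχ1 : χ ≠ 1 := by rintro rfl; simp at hχ
  have hχ3 : χ ^ 3 = 1 := hχ ▸ pow_orderOf_eq_one χ
  simpa [hχ, MulChar.val_neg_one_eq_one_of_odd_order (by decide) hχ3] using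
    gaussSum_mul_gaussSum_pow_orderOf_sub_one hχ1 hψ

section GaussPeriods

variable {p : ℕ} [Fact p.Prime] {χ : MulChar (ZMod p) ℂ}

open scoped Classical in
lemma sum_apply_mulChar_eq_sum_gaussPeriodP (hχ : χ ^ 3 = 1) {f : ℂ → ℂ} (hf : f 0 = 0) :
    ∑ y : ZMod p, f (χ y) * zetaC p ^ y.val =
      ∑ j ∈ range 3, f (zeta3 ^ j) * gaussPeriodP p (fun x => χ x) j := by
  have hsplit : ∀ y : ZMod p, f (χ y) * zetaC p ^ y.val =
      ∑ j ∈ range 3, if y ≠ 0 ∧ χ y = zeta3 ^ j then f (zeta3 ^ j) * zetaC p ^ y.val else 0 := by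
    intro y
    rcases eq_or_ne y 0 with rfl | hy
    · simp [MulChar.map_zero, hf]
    obtain ⟨j₀, hj₀, hχy⟩ := isPrimitiveRoot_zeta3.eq_pow_of_pow_eq_one
      (MulChar.apply_pow_eq_one hχ (isUnit_iff_ne_zero.mpr hy))
    rw [sum_eq_single_of_mem j₀ (mem_range.mpr hj₀), if_pos ⟨hy, hχy.symm⟩, hχy]
    intro j hj hne
    refine if_neg fun h => hne ?_
    exact isPrimitiveRoot_zeta3.pow_inj (mem_range.mp hj) hj₀ (h.2.symm.trans hχy.symm)
  simp_rw [hsplit, sum_comm (s := univ), ← sum_filter, gaussPeriodP, mul_sum]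

lemma gaussSum_pow_zmodChar_eq (hχ : χ ^ 3 = 1) {k : ℕ} (hk : k ≠ 0) :
    gaussSum (χ ^ k) (AddChar.zmodChar p (isPrimitiveRoot_zetaC p).pow_eq_one) =
      ∑ j ∈ range 3, (zeta3 ^ j) ^ k * gaussPeriodP p (fun x => χ x) j := by
  refine Eq.trans ?_ (sum_apply_mulChar_eq_sum_gaussPeriodP (f := (· ^ k)) hχ (zero_pow hk))
  simp only [gaussSum, MulChar.pow_apply' χ hk, AddChar.zmodChar_apply]

end GaussPeriods

theorem stmt14_general (p : ℕ) [NeZero p] (hp : p.Prime)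
    (χ : MulChar (ZMod p) ℂ) (hord : orderOf χ = 3) :
    (gaussPeriodP p (fun x => χ x) 0 - gaussPeriodP p (fun x => χ x) 2) ^ 2 -
        (gaussPeriodP p (fun x => χ x) 0 - gaussPeriodP p (fun x => χ x) 2) *
          (gaussPeriodP p (fun x => χ x) 1 - gaussPeriodP p (fun x => χ x) 2) +
        (gaussPeriodP p (fun x => χ x) 1 - gaussPeriodP p (fun x => χ x) 2) ^ 2 = (p : ℂ) := by
  have := Fact.mk hp
  have hχ3 : χ ^ 3 = 1 := hord ▸ pow_orderOf_eq_one χ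
  have hg₁ := gaussSum_pow_zmodChar_eq hχ3 one_ne_zero
  rw [pow_one] at hg₁
  have hprod := gaussSum_mul_gaussSum_sq_eq_card hord
    (AddChar.zmodChar_primitive_of_primitive_root p (isPrimitiveRoot_zetaC p))
  rw [hg₁, gaussSum_pow_zmodChar_eq hχ3 two_ne_zero] at hprod
  simp only [sum_range_succ, sum_range_zero, zero_add, ZMod.card] at hprod
  rw [← mul_add_mul_add_mul_eq_norm_form one_add_zeta3_add_zeta3_sq, ← hprod]
  ring

theorem stmt14 (p : ℕ) [NeZero p] (hp : p.Prime) (hp6 : p % 6 = 1)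
    (χ : MulChar (ZMod p) ℂ) (hord : orderOf χ = 3) :
    (gaussPeriodP p (fun x => χ x) 0 - gaussPeriodP p (fun x => χ x) 2) ^ 2 -
        (gaussPeriodP p (fun x => χ x) 0 - gaussPeriodP p (fun x => χ x) 2) *
          (gaussPeriodP p (fun x => χ x) 1 - gaussPeriodP p (fun x => χ x) 2) +
        (gaussPeriodP p (fun x => χ x) 1 - gaussPeriodP p (fun x => χ x) 2) ^ 2 = (p : ℂ) :=
  stmt14_general p hp χ hord
end
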